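/- arXiv:2510.10705 — 3 statements merged into one kernel-verified Lean document; each statement's English description precedes it below -/
import Mathlib

section
/- Let G be a finite simple undirected unweighted graph, u ≠ v two vertices each with degree at least 1, and R(u,v) = sup_{x : xᵀLx > 0} (x_u − x_v)²/(xᵀLx) the effective resistance. Then R(u,v) ≥ (1/2)·(1/deg(u) + 1/deg(v)). -/
/-!
Testing the supremum with the indicator vector of `w` gives numerator `1` and denominator
`xᵀ L x = L w w = deg w`, so `R(u, v) ≥ 1 / deg u` and, symmetrically, `R(u, v) ≥ 1 / deg v`;
the average of the two bounds is at most their maximum.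
-/

open Matrix

namespace SimpleGraph

variable {V : Type*} [Fintype V] [DecidableEq V] (G : SimpleGraph V) [DecidableRel G.Adj]

theorem lapMatrix_apply_self {R : Type*} [AddGroupWithOne R] (w : V) :
    G.lapMatrix R w w = G.degree w := by
  simp [lapMatrix, degMatrix]

variable {G} {Q : (V → ℝ) → ℝ}
  (hQ : ∀ x, Q x = (1/2) * ∑ a, ∑ b, if G.Adj a b then (x a - x b)^2 else 0)
include hQ

theorem dirichletForm_single (w : V) : Q (Pi.single w 1) = G.degree w := by
  have hL : ∀ x, Q x = toLinearMap₂' ℝ (G.lapMatrix ℝ) x x := fun x => by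
    rw [hQ, lapMatrix_toLinearMap₂']; ring
  rw [hL, toLinearMap₂'_apply', single_dotProduct, mulVec_single_one, one_mul]
  exact lapMatrix_apply_self G w

theorem ofReal_inv_degree_le_iSup {w z : V} (hwz : w ≠ z) (hdeg : 1 ≤ G.degree w) :
    ENNReal.ofReal (1 / (G.degree w : ℝ))
      ≤ ⨆ (x : V → ℝ) (_ : 0 < Q x), ENNReal.ofReal ((x w - x z)^2 / Q x) := by
  have hpos : 0 < Q (Pi.single w 1) := by
    rw [dirichletForm_single hQ]; exact_mod_cast hdeg
  refine le_of_eq_of_le ?_ (le_iSup₂_of_le (Pi.single w 1) hpos le_rfl)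
  rw [dirichletForm_single hQ, Pi.single_eq_same, Pi.single_eq_of_ne hwz.symm]
  norm_num

end SimpleGraph

theorem stmt6 {V : Type*} [Fintype V] (G : SimpleGraph V) [DecidableRel G.Adj]
    (Q : (V → ℝ) → ℝ)
    (hQ : ∀ x, Q x = (1/2) * ∑ a, ∑ b, if G.Adj a b then (x a - x b)^2 else 0)
    (u v : V) (huv : u ≠ v) (hdegu : 1 ≤ G.degree u) (hdegv : 1 ≤ G.degree v) :
    ENNReal.ofReal ((1/2) * (1 / (G.degree u : ℝ) + 1 / (G.degree v : ℝ)))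
      ≤ ⨆ (x : V → ℝ) (_ : 0 < Q x), ENNReal.ofReal ((x u - x v)^2 / Q x) := by
  classical
  have hu := SimpleGraph.ofReal_inv_degree_le_iSup hQ huv hdegu
  have hv := SimpleGraph.ofReal_inv_degree_le_iSup hQ huv.symm hdegv
  simp_rw [show ∀ x : V → ℝ, (x v - x u) ^ 2 = (x u - x v) ^ 2 from fun x => sub_sq_comm _ _] at hv
  have hmean (a b : ℝ) : (1/2) * (a + b) ≤ max a b := by
    linarith [le_max_left a b, le_max_right a b]
  calc ENNReal.ofReal ((1/2) * (1 / (G.degree u : ℝ) + 1 / (G.degree v : ℝ)))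
      ≤ ENNReal.ofReal (max (1 / (G.degree u : ℝ)) (1 / (G.degree v : ℝ))) :=
        ENNReal.ofReal_le_ofReal (hmean _ _)
    _ = max (ENNReal.ofReal (1 / (G.degree u : ℝ))) (ENNReal.ofReal (1 / (G.degree v : ℝ))) :=
        ENNReal.ofReal_max _ _
    _ ≤ _ := max_le hu hv
end

section
/- Under the β-level prerounding setup — x_e ∈ {0,1} an indicator with Σ_{e∈E⁺} x_e + Σ_{e∈E⁻}(1−x_e) = OPT, distances d_e ∈ [0,1] with Σ_{e∈E⁺} d_e + Σ_{e∈E⁻}(1−d_e) ≤ β·OPT, and probabilities p_e with p_e ≤ 2d_e for e ∈ E⁺ and p_e = d_e for e ∈ E⁻ — the quantity Σ_{e∈E⁺∪E⁻}[x_e(1−p_e) + (1−x_e)p_e] is at most (2β+1)·OPT. -/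
theorem stmt10 {α : Type*} [DecidableEq α] (Ep En : Finset α)
    (hdisj : Disjoint Ep En)
    (p d x : α → ℝ) (β OPT : ℝ) (hβ : 1 ≤ β) (hOPT : 0 ≤ OPT)
    (hx : ∀ e, x e = 0 ∨ x e = 1)
    (hOPTdef : (∑ e ∈ Ep, x e) + ∑ e ∈ En, (1 - x e) = OPT)
    (hd : ∀ e, d e ∈ Set.Icc (0:ℝ) 1)
    (hp : ∀ e, p e ∈ Set.Icc (0:ℝ) 1)
    (hppos : ∀ e ∈ Ep, p e ≤ 2 * d e)
    (hpneg : ∀ e ∈ En, p e = d e)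
    (hpred : (∑ e ∈ Ep, d e) + ∑ e ∈ En, (1 - d e) ≤ β * OPT) :
    ∑ e ∈ Ep ∪ En, (x e * (1 - p e) + (1 - x e) * p e) ≤ (2 * β + 1) * OPT := by
  rw [Finset.sum_union hdisj]
  have h1 : ∑ e ∈ Ep, (x e * (1 - p e) + (1 - x e) * p e)
      ≤ ∑ e ∈ Ep, (x e + 2 * d e) := by
    apply Finset.sum_le_sum
    intro e he
    have hpe := hp e
    have hde := hd e
    have := hppos e he
    rcases hx e with h | h <;> simp [h, Set.mem_Icc] at * <;> linarith
  have h2 : ∑ e ∈ En, (x e * (1 - p e) + (1 - x e) * p e)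
      ≤ ∑ e ∈ En, ((1 - x e) + 2 * (1 - d e)) := by
    apply Finset.sum_le_sum
    intro e he
    have hpe := hp e
    have hde := hd e
    have := hpneg e he
    rcases hx e with h | h <;> simp [h, Set.mem_Icc] at * <;> linarith
  have e1 : ∑ e ∈ Ep, (x e + 2 * d e) = (∑ e ∈ Ep, x e) + 2 * ∑ e ∈ Ep, d e := by
    rw [Finset.sum_add_distrib, Finset.mul_sum]
  have e2 : ∑ e ∈ En, ((1 - x e) + 2 * (1 - d e))
      = (∑ e ∈ En, (1 - x e)) + 2 * ∑ e ∈ En, (1 - d e) := by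
    rw [Finset.sum_add_distrib, Finset.mul_sum]
  nlinarith [hpred, hOPTdef]
end

section
/- Let edges of a finite complete labeled graph be independently rerounded: pair e becomes positive with probability 1 − p_e and negative with probability p_e, and let OPT' denote the (random) optimal correlation clustering cost of the rerounded instance, and OPT that of the original. If p_e ≤ 2d_e for original positive pairs e, p_e = d_e for original negative pairs e, and Σ_{e positive} d_e + Σ_{e negative} (1 − d_e) ≤ β·OPT, then E[OPT'] ≤ (2β + 1)·OPT. -/
/-!
Fix an optimal clustering `c` of the original labeling `s`. Its cost on the rerounded labeling
bounds `OPT'` pointwise, and exceeds its cost `OPT` on `s` by at most the number of pairs whose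
label flipped. A positive pair flips with probability `p_e ≤ 2 d_e` and a negative one with
probability `1 - p_e = 1 - d_e`, so the expected number of flips is at most `2 β OPT`.
-/

open MeasureTheory

-- Correlation clustering cost of the clustering encoded by `c : V → V`
-- (two vertices are in the same cluster iff they get the same value) on the
-- complete labeled graph given by `t : Sym2 V → Bool` (`true` = positive).
open Classical in
noncomputable def ccCost {V : Type*} [Fintype V] [DecidableEq V]
    (t : Sym2 V → Bool) (c : V → V) : ℕ :=
  (Finset.univ.filter (fun e : Sym2 V => ¬ e.IsDiag ∧
    ((t e = true ∧ ¬ (∀ u ∈ e, ∀ v ∈ e, c u = c v)) ∨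
     (t e = false ∧ (∀ u ∈ e, ∀ v ∈ e, c u = c v))))).card

/-- Optimal correlation clustering cost of the labeling `t`. -/
noncomputable def ccOPT {V : Type*} [Fintype V] [DecidableEq V]
    (t : Sym2 V → Bool) : ℕ :=
  Finset.univ.inf' (@Finset.univ_nonempty (V → V) _ ⟨id⟩) (fun c => ccCost t c)

open Finset

theorem integral_card_filter_mem {Ω ι : Type*} [MeasurableSpace Ω] {μ : Measure Ω}
    [IsFiniteMeasure μ] (E : Finset ι) {A : ι → Set Ω} [∀ i ω, Decidable (ω ∈ A i)]
    (hA : ∀ i, MeasurableSet (A i)) :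
    ∫ ω, (#{i ∈ E | ω ∈ A i} : ℝ) ∂μ = ∑ i ∈ E, μ.real (A i) := by
  have hind (ω : Ω) : (#{i ∈ E | ω ∈ A i} : ℝ) = ∑ i ∈ E, (A i).indicator 1 ω := by
    simp only [card_filter, Nat.cast_sum, Nat.cast_ite, Nat.cast_one, Nat.cast_zero,
      Set.indicator_apply, Pi.one_apply]
  simp_rw [hind]
  rw [integral_finsetSum _ fun i _ => (integrable_const 1).indicator (hA i)]
  exact sum_congr rfl fun i _ => integral_indicator_one (hA i)

section

variable {V : Type*} [Fintype V] [DecidableEq V]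

theorem ccOPT_le_ccCost (t : Sym2 V → Bool) (c : V → V) : ccOPT t ≤ ccCost t c :=
  inf'_le _ (mem_univ c)

theorem exists_ccCost_eq_ccOPT (t : Sym2 V → Bool) : ∃ c, ccCost t c = ccOPT t := by
  obtain ⟨c, -, hc⟩ := exists_mem_eq_inf' (@univ_nonempty (V → V) _ ⟨id⟩) (fun c => ccCost t c)
  exact ⟨c, hc.symm⟩

def labelDist (s t : Sym2 V → Bool) : ℕ := #{e ∈ univ.filter (¬ ·.IsDiag) | t e ≠ s e}

theorem ccCost_le_ccCost_add_labelDist (s t : Sym2 V → Bool) (c : V → V) :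
    ccCost t c ≤ ccCost s c + labelDist s t := by
  refine (card_le_card fun e he => ?_).trans (card_union_le _ _)
  simp only [mem_filter, mem_univ, true_and, mem_union] at he ⊢
  by_cases hst : t e = s e
  · exact Or.inl (by simpa only [hst] using he)
  · exact Or.inr ⟨he.1, hst⟩

variable {Ω : Type*} [MeasurableSpace Ω] {μ : Measure Ω} {σ : Ω → Sym2 V → Bool}

theorem integral_labelDist [IsFiniteMeasure μ] (s : Sym2 V → Bool) (hmeas : ∀ e, Measurable fun ω => σ ω e) :
    ∫ ω, (labelDist s (σ ω) : ℝ) ∂μ =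
      ∑ e ∈ univ.filter (¬ ·.IsDiag), μ.real {ω | σ ω e ≠ s e} :=
  integral_card_filter_mem (A := fun e => {ω | σ ω e ≠ s e}) _
    fun e => hmeas e (.of_discrete (s := {s e}ᶜ))

theorem sum_measureReal_label_ne_le [IsProbabilityMeasure μ] (s : Sym2 V → Bool)
    (hmeas : ∀ e, Measurable fun ω => σ ω e) (p d : Sym2 V → ℝ)
    (hprob : ∀ e : Sym2 V, ¬ e.IsDiag → μ.real {ω | σ ω e = false} = p e)
    (hppos : ∀ e : Sym2 V, ¬ e.IsDiag → s e = true → p e ≤ 2 * d e)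
    (hpneg : ∀ e : Sym2 V, ¬ e.IsDiag → s e = false → p e = d e) :
    ∑ e ∈ univ.filter (¬ ·.IsDiag), μ.real {ω | σ ω e ≠ s e} ≤
      2 * ∑ e ∈ univ.filter (fun e : Sym2 V => ¬ e.IsDiag ∧ s e = true), d e
        + ∑ e ∈ univ.filter (fun e : Sym2 V => ¬ e.IsDiag ∧ s e = false), (1 - d e) := by
  rw [← sum_filter_add_sum_filter_not _ (s · = true), filter_filter, filter_filter, mul_sum]
  simp only [Bool.not_eq_true]
  gcongr with e he e he
  · obtain ⟨-, hdiag, hs⟩ := mem_filter.1 he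
    simp only [hs, ne_eq, Bool.not_eq_true]
    exact (hprob e hdiag).trans_le (hppos e hdiag hs)
  · obtain ⟨-, hdiag, hs⟩ := mem_filter.1 he
    have hfalse : MeasurableSet {ω | σ ω e = false} := hmeas e (.of_discrete (s := {false}))
    rw [hs, ← hpneg e hdiag hs, ← hprob e hdiag, ← probReal_compl_eq_one_sub hfalse]
    rfl

end

open Classical in
theorem stmt18_general {V : Type*} [Fintype V] [DecidableEq V]
    {Ω : Type*} [MeasurableSpace Ω] (μ : Measure Ω) [IsProbabilityMeasure μ]
    (s : Sym2 V → Bool)            -- original labeling: `true` = positive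
    (σ : Ω → Sym2 V → Bool)        -- random rerounded labeling
    (hmeas : ∀ e, Measurable (fun ω => σ ω e))
    (p d : Sym2 V → ℝ)
    (hd01 : ∀ e, d e ∈ Set.Icc (0:ℝ) 1)
    (hprob : ∀ e : Sym2 V, ¬ e.IsDiag → (μ {ω | σ ω e = false}).toReal = p e)
    (hppos : ∀ e : Sym2 V, ¬ e.IsDiag → s e = true → p e ≤ 2 * d e)
    (hpneg : ∀ e : Sym2 V, ¬ e.IsDiag → s e = false → p e = d e)
    (β : ℝ)
    (hpred :
      (∑ e ∈ Finset.univ.filter (fun e : Sym2 V => ¬ e.IsDiag ∧ s e = true), d e)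
        + (∑ e ∈ Finset.univ.filter (fun e : Sym2 V => ¬ e.IsDiag ∧ s e = false),
            (1 - d e))
        ≤ β * (ccOPT s : ℝ)) :
    ∫ ω, (ccOPT (σ ω) : ℝ) ∂μ ≤ (2 * β + 1) * (ccOPT s : ℝ) := by
  obtain ⟨c, hc⟩ := exists_ccCost_eq_ccOPT s
  have hint (g : (Sym2 V → Bool) → ℝ) : Integrable (fun ω => g (σ ω)) μ :=
    Integrable.of_finite.comp_measurable (measurable_pi_iff.mpr hmeas)
  have hneg : 0 ≤ ∑ e ∈ univ.filter (fun e : Sym2 V => ¬ e.IsDiag ∧ s e = false), (1 - d e) :=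
    sum_nonneg fun e _ => sub_nonneg.2 (hd01 e).2
  calc ∫ ω, (ccOPT (σ ω) : ℝ) ∂μ
      ≤ ∫ ω, (ccCost s c + labelDist s (σ ω) : ℝ) ∂μ :=
        integral_mono (hint fun t => ccOPT t) (hint fun t => (ccCost s c + labelDist s t : ℝ))
          fun ω => by
            beta_reduce
            exact_mod_cast (ccOPT_le_ccCost _ c).trans (ccCost_le_ccCost_add_labelDist s _ c)
    _ = ccOPT s + ∑ e ∈ univ.filter (¬ ·.IsDiag), μ.real {ω | σ ω e ≠ s e} := by
        rw [integral_add (integrable_const _) (hint fun t => labelDist s t), integral_const,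
          integral_labelDist s hmeas, hc]
        simp
    _ ≤ ccOPT s + (2 * ∑ e ∈ univ.filter (fun e : Sym2 V => ¬ e.IsDiag ∧ s e = true), d e
          + ∑ e ∈ univ.filter (fun e : Sym2 V => ¬ e.IsDiag ∧ s e = false), (1 - d e)) := by
        gcongr
        exact sum_measureReal_label_ne_le s hmeas p d hprob hppos hpneg
    _ ≤ (2 * β + 1) * ccOPT s := by linarith

open Classical in
theorem stmt18 {V : Type*} [Fintype V] [DecidableEq V]
    {Ω : Type*} [MeasurableSpace Ω] (μ : Measure Ω) [IsProbabilityMeasure μ]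
    (s : Sym2 V → Bool)            -- original labeling: `true` = positive
    (σ : Ω → Sym2 V → Bool)        -- random rerounded labeling
    (hmeas : ∀ e, Measurable (fun ω => σ ω e))
    (hindep : ProbabilityTheory.iIndepFun
      (fun (e : Sym2 V) (ω : Ω) => σ ω e) μ)
    (p d : Sym2 V → ℝ)
    (hp01 : ∀ e, p e ∈ Set.Icc (0:ℝ) 1) (hd01 : ∀ e, d e ∈ Set.Icc (0:ℝ) 1)
    (hprob : ∀ e : Sym2 V, ¬ e.IsDiag → (μ {ω | σ ω e = false}).toReal = p e)
    (hppos : ∀ e : Sym2 V, ¬ e.IsDiag → s e = true → p e ≤ 2 * d e)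
    (hpneg : ∀ e : Sym2 V, ¬ e.IsDiag → s e = false → p e = d e)
    (β : ℝ) (hβ : 1 ≤ β)
    (hpred :
      (∑ e ∈ Finset.univ.filter (fun e : Sym2 V => ¬ e.IsDiag ∧ s e = true), d e)
        + (∑ e ∈ Finset.univ.filter (fun e : Sym2 V => ¬ e.IsDiag ∧ s e = false),
            (1 - d e))
        ≤ β * (ccOPT s : ℝ)) :
    ∫ ω, (ccOPT (σ ω) : ℝ) ∂μ ≤ (2 * β + 1) * (ccOPT s : ℝ) :=
  stmt18_general μ s σ hmeas p d hd01 hprob hppos hpneg β hpred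
end
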